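/- (Uniqueness for BV coefficient) Let λ:[0,T] → (0,∞) be of bounded variation with c₀ = inf λ([0,T]) > 0. Then the strong solution (x,v):[0,T] → H×H of v(t) ∈ ∂φ(x(t)), λ(t)ẋ(t) + v̇(t) + v(t) + ∇ψ(x(t)) = 0 a.e., x(0)=x₀, v(0)=v₀ is unique: any two strong solutions with the same initial data coincide on [0,T]. -/

import Mathlib

/-!
Put `X = x - y`, `V = v - w` and `Z = λ • X + V`. Monotonicity of `∂φ` gives `⟪V, X⟫ ≥ 0`, so
`θ = max (c₀ ‖X‖) ‖V‖ ≤ ‖Z‖` because `λ ≥ c₀`. Subtracting the two equations,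
`Z s - Z r = ∫_{(r,s]} X dλ - ∫_r^s (V + ∇ψ x - ∇ψ y)`, where the Stieltjes integral is bounded,
through Riemann sums on uniform grids, by `Var_{[r,s]} λ · sup_{[r,s]} ‖X‖`. This yields
`θ s ≤ C θ r + (F s - F r) · sup_{[r,s]} θ` with `F t = Var_{[0,t]} λ / c₀ + (1 + L_ψ / c₀) t`,
the distribution function of `|dλ| / c₀ + (1 + L_ψ / c₀) dt`. As `F` has right limits, its
increments on `[r, s]` are small for `t₀ < r ≤ s` close to `t₀`; letting `r ↓ t₀` at a zero `t₀`
of `θ` shows that `θ` vanishes on a right neighbourhood of `t₀`, and continuous induction gives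
`θ = 0` on `[0, T]`.
-/

open MeasureTheory Set Filter
open scoped Topology

variable {H : Type*} [NormedAddCommGroup H] [InnerProductSpace ℝ H] [CompleteSpace H]

/-- `v` belongs to the convex subdifferential of `φ` at `x`. -/
def IsSubdiff (φ : H → EReal) (x v : H) : Prop :=
  ∀ y : H, φ x + ((inner ℝ v (y - x) : ℝ) : EReal) ≤ φ y

/-- `φ` is proper, convex and lower semicontinuous. -/
def ProperConvexLSC (φ : H → EReal) : Prop :=
  (∀ z, φ z ≠ ⊥) ∧ (∃ z, φ z ≠ ⊤) ∧ LowerSemicontinuous φ ∧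
  (∀ z w : H, ∀ a b : ℝ, 0 ≤ a → 0 ≤ b → a + b = 1 →
      φ (a • z + b • w) ≤ (a : EReal) * φ z + (b : EReal) * φ w)

/-- Standing assumptions: `φ` proper convex lsc, `ψ` convex with gradient `ψ'`,
and `φ + ψ` bounded below on `H`. -/
def Standing (φ : H → EReal) (ψ : H → ℝ) (ψ' : H → H) : Prop :=
  ProperConvexLSC φ ∧
  ConvexOn ℝ Set.univ ψ ∧ (∀ z, HasGradientAt ψ (ψ' z) z) ∧
  (∃ m : ℝ, ∀ z, (m : EReal) ≤ φ z + (ψ z : EReal))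

/-- The energy gap `(φ+ψ)(x₀) - inf_H (φ+ψ)` as a real number. -/
noncomputable def Egap (φ : H → EReal) (ψ : H → ℝ) (x₀ : H) : ℝ :=
  ((φ x₀ + (ψ x₀ : EReal)) - sInf (Set.range fun z => φ z + (ψ z : EReal))).toReal

/-- `(x, v)` is a strong (absolutely continuous) solution on `[0, T]` of
`v ∈ ∂φ(x)`, `λ ẋ + v̇ + v + ∇ψ(x) = 0` a.e., with a.e. derivatives `x'`, `v'`. -/
structure StrongSol (φ : H → EReal) (ψ' : H → H) (lam : ℝ → ℝ) (T : ℝ)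
    (x v x' v' : ℝ → H) : Prop where
  subdiff : ∀ t ∈ Set.Icc (0:ℝ) T, IsSubdiff φ (x t) (v t)
  xint : IntegrableOn x' (Set.Icc 0 T)
  vint : IntegrableOn v' (Set.Icc 0 T)
  xrep : ∀ t ∈ Set.Icc (0:ℝ) T, x t = x 0 + ∫ s in (0:ℝ)..t, x' s
  vrep : ∀ t ∈ Set.Icc (0:ℝ) T, v t = v 0 + ∫ s in (0:ℝ)..t, v' s
  xderiv : ∀ᵐ t ∂(volume.restrict (Set.Ioo 0 T)), HasDerivAt x (x' t) t
  vderiv : ∀ᵐ t ∂(volume.restrict (Set.Ioo 0 T)), HasDerivAt v (v' t) t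
  eqn : ∀ᵐ t ∂(volume.restrict (Set.Ioo 0 T)),
      lam t • x' t + v' t + v t + ψ' (x t) = 0

section IntegralRepresentation

variable {E : Type*} [NormedAddCommGroup E] [NormedSpace ℝ E]

lemma eq_add_integral_of_forall_eq_add_integral {z z' : ℝ → E} {a b : ℝ}
    (hz' : IntegrableOn z' (Icc a b)) (hz : ∀ t ∈ Icc a b, z t = z a + ∫ u in a..t, z' u)
    {p q : ℝ} (hp : p ∈ Icc a b) (hq : q ∈ Icc a b) : z q = z p + ∫ u in p..q, z' u := by
  have hint : ∀ t ∈ Icc a b, IntervalIntegrable z' volume a t := fun t ht =>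
    (hz'.mono_set (uIcc_subset_Icc (left_mem_Icc.2 (ht.1.trans ht.2)) ht)).intervalIntegrable
  rw [hz q hq, hz p hp, add_assoc, intervalIntegral.integral_add_adjacent_intervals (hint p hp)
    ((hint p hp).symm.trans (hint q hq))]

lemma continuousOn_of_forall_eq_add_integral {z z' : ℝ → E} {a b : ℝ}
    (hz' : IntegrableOn z' (Icc a b)) (hz : ∀ t ∈ Icc a b, z t = z a + ∫ u in a..t, z' u) :
    ContinuousOn z (Icc a b) := by
  rcases lt_or_ge b a with hba | hab
  · simp [Icc_eq_empty_of_lt hba]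
  have := intervalIntegral.continuousOn_primitive_interval (a := a) (b := b) (f := z') (μ := volume)
  rw [uIcc_of_le hab] at this
  exact (continuousOn_const.add (this hz')).congr hz

lemma forall_sub_eq_add_integral {z₁ z₂ z₁' z₂' : ℝ → E} {a b : ℝ}
    (h₁' : IntegrableOn z₁' (Icc a b)) (h₂' : IntegrableOn z₂' (Icc a b))
    (h₁ : ∀ t ∈ Icc a b, z₁ t = z₁ a + ∫ u in a..t, z₁' u)
    (h₂ : ∀ t ∈ Icc a b, z₂ t = z₂ a + ∫ u in a..t, z₂' u) :
    ∀ t ∈ Icc a b, (z₁ - z₂) t = (z₁ - z₂) a + ∫ u in a..t, (z₁' - z₂') u := fun t ht => by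
  have hint : ∀ {g : ℝ → E}, IntegrableOn g (Icc a b) → IntervalIntegrable g volume a t :=
    fun hg =>
      (hg.mono_set (uIcc_subset_Icc (left_mem_Icc.2 (ht.1.trans ht.2)) ht)).intervalIntegrable
  simp only [Pi.sub_apply]
  rw [h₁ t ht, h₂ t ht, intervalIntegral.integral_sub (hint h₁') (hint h₂')]
  abel

end IntegralRepresentation

section BoundedVariation

variable {E : Type*} [NormedAddCommGroup E] [NormedSpace ℝ E]

lemma BoundedVariationOn.abs_le {f : ℝ → ℝ} {s : Set ℝ} (hf : BoundedVariationOn f s)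
    {a t : ℝ} (ha : a ∈ s) (ht : t ∈ s) : |f t| ≤ |f a| + (eVariationOn f s).toReal := by
  have := hf.dist_le ht ha
  rw [Real.dist_eq] at this
  linarith [abs_sub_abs_le_abs_sub (f t) (f a)]

lemma LocallyBoundedVariationOn.aemeasurable_restrict {f : ℝ → ℝ} {s : Set ℝ}
    (hf : LocallyBoundedVariationOn f s) (hs : MeasurableSet s) (μ : Measure ℝ) :
    AEMeasurable f (μ.restrict s) := by
  obtain ⟨p, q, hp, hq, rfl⟩ := hf.exists_monotoneOn_sub_monotoneOn
  exact (aemeasurable_restrict_of_monotoneOn hs hp).sub (aemeasurable_restrict_of_monotoneOn hs hq)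

lemma BoundedVariationOn.integrableOn_smul {f : ℝ → ℝ} {g : ℝ → E} {s : Set ℝ} {μ : Measure ℝ}
    (hf : BoundedVariationOn f s) (hs : MeasurableSet s) (hg : IntegrableOn g s μ) :
    IntegrableOn (fun t => f t • g t) s μ := by
  rcases s.eq_empty_or_nonempty with rfl | ⟨a, ha⟩
  · simp
  exact hg.bdd_smul (|f a| + (eVariationOn f s).toReal)
    (hf.locallyBoundedVariationOn.aemeasurable_restrict hs μ).aestronglyMeasurable
    ((ae_restrict_iff' hs).2 (ae_of_all _ fun t ht => (Real.norm_eq_abs _).trans_le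
      (hf.abs_le ha ht)))

lemma norm_smul_sub_smul_sub_sum_le {α : Type*} [LinearOrder α] {f : α → ℝ} {X : α → E}
    {s : Set α} {C : ℝ} (hf : BoundedVariationOn f s) (hC : ∀ t ∈ s, ‖X t‖ ≤ C)
    {u : ℕ → α} {N : ℕ} (hu : MonotoneOn u (Iic N)) (hus : ∀ i ≤ N, u i ∈ s) :
    ‖f (u N) • X (u N) - f (u 0) • X (u 0)
        - ∑ i ∈ Finset.range N, f (u i) • (X (u (i + 1)) - X (u i))‖
      ≤ (eVariationOn f s).toReal * C := by
  have hC0 : 0 ≤ C := (norm_nonneg _).trans (hC _ (hus 0 N.zero_le))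
  have habel : f (u N) • X (u N) - f (u 0) • X (u 0)
        - ∑ i ∈ Finset.range N, f (u i) • (X (u (i + 1)) - X (u i))
      = ∑ i ∈ Finset.range N, (f (u (i + 1)) - f (u i)) • X (u (i + 1)) := by
    rw [← Finset.sum_range_sub (fun i => f (u i) • X (u i)), ← Finset.sum_sub_distrib]
    refine Finset.sum_congr rfl fun i _ => ?_
    rw [sub_smul, smul_sub]
    abel
  have hvar : ∑ i ∈ Finset.range N, |f (u (i + 1)) - f (u i)| ≤ (eVariationOn f s).toReal := by
    have := eVariationOn.sum_le_of_monotoneOn_Iic (f := f) hu hus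
    simp only [edist_dist, Real.dist_eq] at this
    rwa [← ENNReal.ofReal_sum_of_nonneg (fun i _ => abs_nonneg _),
      ENNReal.ofReal_le_iff_le_toReal hf] at this
  calc _ ≤ ∑ i ∈ Finset.range N, |f (u (i + 1)) - f (u i)| * C := by
        rw [habel]
        refine (norm_sum_le _ _).trans (Finset.sum_le_sum fun i hi => ?_)
        rw [norm_smul, Real.norm_eq_abs]
        exact mul_le_mul_of_nonneg_left (hC _ (hus _ (Finset.mem_range.1 hi)))
          (abs_nonneg _)
    _ ≤ _ := by
        rw [← Finset.sum_mul]
        exact mul_le_mul_of_nonneg_right hvar hC0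

end BoundedVariation

section Grid

variable {E : Type*} [NormedAddCommGroup E] [NormedSpace ℝ E]

noncomputable def leftGridPoint (a h t : ℝ) : ℝ := a + ⌊(t - a) / h⌋ * h

variable {a h t : ℝ}

lemma leftGridPoint_le (hh : 0 < h) : leftGridPoint a h t ≤ t := by
  have := mul_le_mul_of_nonneg_right (Int.floor_le ((t - a) / h)) hh.le
  rw [div_mul_cancel₀ _ hh.ne'] at this
  unfold leftGridPoint; linarith

lemma sub_lt_leftGridPoint (hh : 0 < h) : t - h < leftGridPoint a h t := by
  have := mul_lt_mul_of_pos_right (Int.lt_floor_add_one ((t - a) / h)) hh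
  rw [div_mul_cancel₀ _ hh.ne', add_mul, one_mul] at this
  unfold leftGridPoint; linarith

lemma le_leftGridPoint (hh : 0 < h) (ht : a ≤ t) : a ≤ leftGridPoint a h t := by
  have : (0 : ℝ) ≤ ⌊(t - a) / h⌋ := by
    exact_mod_cast Int.floor_nonneg.2 (div_nonneg (sub_nonneg.2 ht) hh.le)
  unfold leftGridPoint; nlinarith

lemma leftGridPoint_eq (hh : 0 < h) {i : ℕ} (ht : t ∈ Ico (a + i * h) (a + (i + 1) * h)) :
    leftGridPoint a h t = a + i * h := by
  have hfl : ⌊(t - a) / h⌋ = i := by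
    rw [Int.floor_eq_iff, le_div_iff₀ hh, div_lt_iff₀ hh]
    push_cast
    constructor <;> linarith [ht.1, ht.2]
  rw [leftGridPoint, hfl, Int.cast_natCast]

lemma measurable_comp_leftGridPoint (f : ℝ → ℝ) (a h : ℝ) :
    Measurable fun t => f (leftGridPoint a h t) :=
  (measurable_from_top (f := fun k : ℤ => f (a + k * h))).comp
    (Int.measurable_floor.comp ((measurable_id.sub_const a).div_const h))

lemma integral_comp_leftGridPoint_smul {f : ℝ → ℝ} {g : ℝ → E} {b : ℝ} (hh : 0 < h) {N : ℕ}
    (hN : a + N * h = b) (hg : IntegrableOn g (Icc a b)) :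
    ∫ t in a..b, f (leftGridPoint a h t) • g t
      = ∑ i ∈ Finset.range N, f (a + i * h) • ∫ t in a + i * h..a + (i + 1) * h, g t := by
  have hu : Monotone fun i : ℕ => a + i * h := fun i j hij => by
    have : (i : ℝ) ≤ j := by exact_mod_cast hij
    dsimp only; nlinarith
  have hpiece : ∀ i : ℕ, EqOn (fun t => f (a + i * h) • g t)
      (fun t => f (leftGridPoint a h t) • g t) (uIoo (a + i * h) (a + (i + 1) * h)) := by
    intro i t ht
    rw [uIoo_of_le (by simpa using hu i.le_succ)] at ht
    simp only [leftGridPoint_eq hh ⟨ht.1.le, ht.2⟩]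
  have hint : ∀ i < N, IntervalIntegrable (fun t => f (leftGridPoint a h t) • g t) volume
      (a + i * h) (a + ↑(i + 1) * h) := by
    intro i hi
    have hsub : Icc (a + i * h) (a + ↑(i + 1) * h) ⊆ Icc a b :=
      Icc_subset_Icc (by simpa using hu (Nat.zero_le i)) (hN ▸ hu (by omega))
    push_cast at hsub ⊢
    have hg' : IntervalIntegrable g volume (a + i * h) (a + (i + 1) * h) :=
      (intervalIntegrable_iff_integrableOn_Icc_of_le (by simpa using hu i.le_succ)).2
        (hg.mono_set hsub)
    exact (hg'.smul (f (a + i * h))).congr_uIoo (hpiece i)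
  have hsum := intervalIntegral.sum_integral_adjacent_intervals hint
  simp only [Nat.cast_zero, zero_mul, add_zero, hN] at hsum
  rw [← hsum]
  refine Finset.sum_congr rfl fun i _ => ?_
  push_cast
  rw [← intervalIntegral.integral_smul, intervalIntegral.integral_congr_uIoo (hpiece i)]

end Grid

section IntegrationByParts

variable {E : Type*} [NormedAddCommGroup E] [NormedSpace ℝ E]

lemma tendsto_integral_comp_leftGridPoint_smul {f : ℝ → ℝ} {g : ℝ → E} {a b : ℝ} (hab : a < b)
    (hf : BoundedVariationOn f (Icc a b)) (hg : IntegrableOn g (Icc a b)) :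
    Tendsto (fun n : ℕ => ∫ t in a..b, f (leftGridPoint a ((b - a) / (n + 1)) t) • g t) atTop
      (𝓝 (∫ t in a..b, f t • g t)) := by
  have hh : ∀ n : ℕ, 0 < (b - a) / (n + 1) := fun n => by
    have := sub_pos.2 hab; positivity
  have hmem : ∀ n : ℕ, ∀ t ∈ Icc a b, leftGridPoint a ((b - a) / (n + 1)) t ∈ Icc a b :=
    fun n t ht => ⟨le_leftGridPoint (hh n) ht.1, (leftGridPoint_le (hh n)).trans ht.2⟩
  have hg' : IntegrableOn g (Ioc a b) := hg.mono_set Ioc_subset_Icc_self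
  simp only [intervalIntegral.integral_of_le hab.le]
  refine tendsto_integral_of_dominated_convergence
    (fun t => (|f a| + (eVariationOn f (Icc a b)).toReal) * ‖g t‖)
    (fun n => ((measurable_comp_leftGridPoint f a _).aestronglyMeasurable).smul
      hg'.aestronglyMeasurable) (hg'.norm.const_mul _) (fun n => ?_) ?_
  · refine (ae_restrict_iff' measurableSet_Ioc).2 (ae_of_all _ fun t ht => ?_)
    rw [norm_smul, Real.norm_eq_abs]
    exact mul_le_mul_of_nonneg_right
      (hf.abs_le ⟨le_rfl, hab.le⟩ (hmem n t (Ioc_subset_Icc_self ht))) (norm_nonneg _)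
  · have hcont : ∀ᵐ t ∂volume.restrict (Ioc a b), ContinuousWithinAt f (Icc a b) t :=
      ae_restrict_of_ae_restrict_of_subset Ioc_subset_Icc_self
        ((hf.locallyBoundedVariationOn.ae_differentiableWithinAt measurableSet_Icc).mono
          fun t ht => ht.continuousWithinAt)
    filter_upwards [hcont, ae_restrict_mem measurableSet_Ioc] with t hft ht
    refine Tendsto.smul_const (hft.tendsto.comp (tendsto_nhdsWithin_iff.2 ⟨?_, ?_⟩)) (g t)
    · have hlim : Tendsto (fun n : ℕ => t - (b - a) / (n + 1)) atTop (𝓝 t) := by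
        have h0 : Tendsto (fun n : ℕ => (b - a) / ((n : ℝ) + 1)) atTop (𝓝 0) :=
          tendsto_const_nhds.div_atTop
            (tendsto_natCast_atTop_atTop.atTop_add (tendsto_const_nhds (x := (1 : ℝ))))
        simpa using tendsto_const_nhds.sub h0
      exact tendsto_of_tendsto_of_tendsto_of_le_of_le hlim tendsto_const_nhds
        (fun n => (sub_lt_leftGridPoint (hh n)).le) fun n => leftGridPoint_le (hh n)
    · exact Eventually.of_forall fun n => hmem n t (Ioc_subset_Icc_self ht)

theorem norm_smul_sub_smul_sub_integral_smul_le {f : ℝ → ℝ} {X X' : ℝ → E} {a b C : ℝ}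
    (hab : a ≤ b) (hf : BoundedVariationOn f (Icc a b)) (hX' : IntegrableOn X' (Icc a b))
    (hX : ∀ t ∈ Icc a b, X t = X a + ∫ u in a..t, X' u) (hC : ∀ t ∈ Icc a b, ‖X t‖ ≤ C) :
    ‖f b • X b - f a • X a - ∫ t in a..b, f t • X' t‖ ≤ (eVariationOn f (Icc a b)).toReal * C := by
  rcases hab.eq_or_lt with rfl | hab
  · simp
  refine le_of_tendsto ((tendsto_const_nhds.sub
    (tendsto_integral_comp_leftGridPoint_smul hab hf hX')).norm) (Eventually.of_forall fun n => ?_)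
  set h := (b - a) / (n + 1)
  have hh : 0 < h := by have := sub_pos.2 hab; positivity
  have hN : a + ((n + 1 : ℕ) : ℝ) * h = b := by
    simp only [h]; push_cast; field_simp; ring
  have hu : MonotoneOn (fun i : ℕ => a + i * h) (Iic (n + 1)) := fun i _ j _ hij => by
    have : (i : ℝ) ≤ j := by exact_mod_cast hij
    dsimp only; nlinarith
  have hus : ∀ i ≤ n + 1, a + i * h ∈ Icc a b := fun i hi =>
    ⟨by simpa using hu (Nat.zero_le _) hi (Nat.zero_le _),
      hN ▸ hu hi (mem_Iic.2 le_rfl) hi⟩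
  have hsum := norm_smul_sub_smul_sub_sum_le hf hC hu hus
  simp only [Nat.cast_zero, zero_mul, add_zero, hN] at hsum
  have hpieces : ∀ i ∈ Finset.range (n + 1), f (a + i * h) • ∫ t in a + i * h..a + (i + 1) * h, X' t
      = f (a + i * h) • (X (a + ↑(i + 1) * h) - X (a + i * h)) := fun i hi => by
    have hi := Finset.mem_range.1 hi
    rw [eq_add_integral_of_forall_eq_add_integral hX' hX (hus i hi.le) (hus (i + 1) hi),
      add_sub_cancel_left]
    push_cast; rfl
  rwa [integral_comp_leftGridPoint_smul hh hN hX', Finset.sum_congr rfl hpieces]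

theorem norm_smul_add_sub_smul_add_le {f : ℝ → ℝ} {X X' V V' G : ℝ → E} {a b C D : ℝ}
    (hab : a ≤ b) (hf : BoundedVariationOn f (Icc a b)) (hX' : IntegrableOn X' (Icc a b))
    (hX : ∀ t ∈ Icc a b, X t = X a + ∫ u in a..t, X' u) (hV : V b = V a + ∫ u in a..b, V' u)
    (hG : IntegrableOn G (Icc a b))
    (hV' : ∀ᵐ t ∂volume.restrict (Ioo a b), V' t = -(f t • X' t + G t))
    (hC : ∀ t ∈ Icc a b, ‖X t‖ ≤ C) (hD : ∀ t ∈ Icc a b, ‖G t‖ ≤ D) :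
    ‖(f b • X b + V b) - (f a • X a + V a)‖
      ≤ (eVariationOn f (Icc a b)).toReal * C + D * (b - a) := by
  have hint : ∫ u in a..b, V' u = -((∫ t in a..b, f t • X' t) + ∫ t in a..b, G t) := by
    rw [Measure.restrict_congr_set Ioo_ae_eq_Ioc, ← uIoc_of_le hab] at hV'
    rw [intervalIntegral.integral_congr_ae_restrict hV', intervalIntegral.integral_neg,
      intervalIntegral.integral_add
        ((intervalIntegrable_iff_integrableOn_Icc_of_le hab).2
          (hf.integrableOn_smul measurableSet_Icc hX'))
        ((intervalIntegrable_iff_integrableOn_Icc_of_le hab).2 hG)]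
  have hGint : ‖∫ t in a..b, G t‖ ≤ D * (b - a) := by
    simpa [abs_of_nonneg (sub_nonneg.2 hab)] using
      intervalIntegral.norm_integral_le_of_norm_le_const fun t ht =>
        hD t (Ioc_subset_Icc_self (uIoc_of_le hab ▸ ht))
  calc ‖(f b • X b + V b) - (f a • X a + V a)‖
      = ‖(f b • X b - f a • X a - ∫ t in a..b, f t • X' t) - ∫ t in a..b, G t‖ := by
        rw [hV, hint]; congr 1; abel
    _ ≤ _ := (norm_sub_le _ _).trans
        (add_le_add (norm_smul_sub_smul_sub_integral_smul_le hab hf hX' hX hC) hGint)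

end IntegrationByParts

section Gronwall

lemma MonotoneOn.exists_forall_sub_le {F : ℝ → ℝ} {x b ε : ℝ} (hF : MonotoneOn F (Ico x b))
    (hxb : x < b) (hε : 0 < ε) :
    ∃ t₀ ∈ Ioo x b, ∀ r s, x < r → r ≤ s → s ≤ t₀ → F s - F r ≤ ε := by
  have hbdd : BddBelow (F '' Ioo x b) := ⟨F x, by
    rintro _ ⟨t, ht, rfl⟩; exact hF (left_mem_Ico.2 hxb) (Ioo_subset_Ico_self ht) ht.1.le⟩
  obtain ⟨_, ⟨t₀, ht₀, rfl⟩, hFt₀⟩ : ∃ y ∈ F '' Ioo x b, y < sInf (F '' Ioo x b) + ε :=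
    exists_lt_of_csInf_lt ((nonempty_Ioo.2 hxb).image F) (by linarith)
  refine ⟨t₀, ht₀, fun r s hxr hrs hst₀ => ?_⟩
  have hs : s ∈ Ioo x b := ⟨hxr.trans_le hrs, hst₀.trans_lt ht₀.2⟩
  have h₁ : F s ≤ F t₀ := hF (Ioo_subset_Ico_self hs) (Ioo_subset_Ico_self ht₀) hst₀
  have h₂ : sInf (F '' Ioo x b) ≤ F r :=
    csInf_le hbdd ⟨r, ⟨hxr, (hrs.trans hst₀).trans_lt ht₀.2⟩, rfl⟩
  linarith

lemma eventually_eq_zero_of_stieltjes_gronwall {θ F : ℝ → ℝ} {a b C : ℝ}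
    (hθ : ContinuousOn θ (Icc a b)) (hθ0 : ∀ t ∈ Icc a b, 0 ≤ θ t)
    (hF : MonotoneOn F (Icc a b))
    (hest : ∀ r s M, a ≤ r → r ≤ s → s ≤ b → (∀ t ∈ Icc r s, θ t ≤ M) →
      θ s ≤ C * θ r + (F s - F r) * M)
    {x : ℝ} (hx : x ∈ Ico a b) (hθx : θ x = 0) : ∀ᶠ t in 𝓝[>] x, θ t = 0 := by
  obtain ⟨t₀, ⟨hxt₀, ht₀b⟩, hsmall⟩ :=
    (hF.mono (Ico_subset_Icc_self.trans (Icc_subset_Icc_left hx.1))).exists_forall_sub_le hx.2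
      one_half_pos
  have hIcc : Icc x t₀ ⊆ Icc a b := Icc_subset_Icc hx.1 ht₀b.le
  obtain ⟨τ, hτ, hmax⟩ := isCompact_Icc.exists_isMaxOn (nonempty_Icc.2 hxt₀.le) (hθ.mono hIcc)
  have hM0 : 0 ≤ θ τ := hθ0 τ (hIcc hτ)
  -- Taking `r > x` avoids the jump of `F` at `x`, and `C * θ r → 0` as `r ↓ x`.
  have hhalf : ∀ s ∈ Ioc x t₀, θ s ≤ θ τ / 2 := by
    intro s hs
    have := left_nhdsWithin_Ioc_neBot hs.1
    have hlim : Tendsto (fun r => C * θ r + θ τ / 2) (𝓝[Ioc x s] x) (𝓝 (θ τ / 2)) := by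
      have := ((hθ x (Ico_subset_Icc_self hx)).mono (Ioc_subset_Icc_self.trans
        (Icc_subset_Icc_right hs.2) |>.trans hIcc)).tendsto
      simpa [hθx] using (this.const_mul C).add_const (θ τ / 2)
    refine ge_of_tendsto hlim (eventually_nhdsWithin_of_forall fun r hr => ?_)
    have hrs : Icc r s ⊆ Icc x t₀ := Icc_subset_Icc hr.1.le hs.2
    calc θ s ≤ C * θ r + (F s - F r) * θ τ :=
          hest r s _ (hx.1.trans hr.1.le) hr.2 (hs.2.trans ht₀b.le) fun t ht => hmax (hrs ht)
      _ ≤ C * θ r + θ τ / 2 := by nlinarith [hsmall r s hr.1 hr.2 hs.2]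
  have hM : θ τ ≤ 0 := by
    rcases hτ.1.eq_or_lt with h | h
    · rw [← h, hθx]
    · linarith [hhalf τ ⟨h, hτ.2⟩]
  filter_upwards [Ioo_mem_nhdsGT hxt₀] with t ht
  exact le_antisymm ((hmax (Ioo_subset_Icc_self ht)).trans hM)
    (hθ0 t (hIcc (Ioo_subset_Icc_self ht)))

theorem eqOn_zero_of_stieltjes_gronwall {θ F : ℝ → ℝ} {a b C : ℝ}
    (hθ : ContinuousOn θ (Icc a b)) (hθ0 : ∀ t ∈ Icc a b, 0 ≤ θ t) (hθa : θ a = 0)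
    (hF : MonotoneOn F (Icc a b))
    (hest : ∀ r s M, a ≤ r → r ≤ s → s ≤ b → (∀ t ∈ Icc r s, θ t ≤ M) →
      θ s ≤ C * θ r + (F s - F r) * M) :
    EqOn θ 0 (Icc a b) := by
  have hclosed : IsClosed (θ ⁻¹' {0} ∩ Icc a b) := by
    rw [inter_comm]; exact hθ.preimage_isClosed_of_isClosed isClosed_Icc isClosed_singleton
  exact hclosed.Icc_subset_of_forall_mem_nhdsWithin hθa fun x hx =>
    eventually_eq_zero_of_stieltjes_gronwall hθ hθ0 hF hest hx.2 hx.1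

end Gronwall

section SolutionDistance

variable {E : Type*} [NormedAddCommGroup E]

/-- Equivalent to the paper's `θ = (c₀² ‖x - y‖² + ‖v - w‖²)^(1/2)`. -/
def solDist (c₀ : ℝ) (x v y w : ℝ → E) (t : ℝ) : ℝ := max (c₀ * ‖x t - y t‖) ‖v t - w t‖

variable {c₀ : ℝ} {x v y w : ℝ → E}

lemma norm_sub_le_solDist_div (hc₀ : 0 < c₀) (t : ℝ) :
    ‖x t - y t‖ ≤ solDist c₀ x v y w t / c₀ := by
  rw [le_div_iff₀ hc₀, mul_comm]; exact le_max_left _ _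

lemma eq_and_eq_of_solDist_eq_zero (hc₀ : 0 < c₀) {t : ℝ} (h : solDist c₀ x v y w t = 0) :
    x t = y t ∧ v t = w t := by
  have hx := norm_sub_le_solDist_div (x := x) (v := v) (y := y) (w := w) hc₀ t
  have hv : ‖v t - w t‖ ≤ solDist c₀ x v y w t := le_max_right _ _
  rw [h, zero_div] at hx
  rw [h] at hv
  exact ⟨sub_eq_zero.1 (norm_le_zero_iff.1 hx), sub_eq_zero.1 (norm_le_zero_iff.1 hv)⟩

lemma norm_smul_sub_add_sub_le_solDist [NormedSpace ℝ E] (hc₀ : 0 < c₀) {l B t : ℝ}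
    (hl : |l| ≤ B) :
    ‖l • (x t - y t) + (v t - w t)‖ ≤ (B / c₀ + 1) * solDist c₀ x v y w t := by
  have hB : 0 ≤ B := (abs_nonneg l).trans hl
  calc _ ≤ |l| * ‖x t - y t‖ + ‖v t - w t‖ := by
        rw [← Real.norm_eq_abs, ← norm_smul]; exact norm_add_le _ _
    _ ≤ B * (solDist c₀ x v y w t / c₀) + solDist c₀ x v y w t :=
        add_le_add (mul_le_mul hl (norm_sub_le_solDist_div hc₀ t) (norm_nonneg _) hB)
          (le_max_right _ _)
    _ = _ := by ring

end SolutionDistance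

section Solutions

variable {E : Type*} [NormedAddCommGroup E] [InnerProductSpace ℝ E]

lemma IsSubdiff.ne_top {φ : E → EReal} (hne : ∃ z, φ z ≠ ⊤) {x v : E} (h : IsSubdiff φ x v) :
    φ x ≠ ⊤ := by
  intro htop
  obtain ⟨z, hz⟩ := hne
  have := h z
  rw [htop, EReal.top_add_of_ne_bot (EReal.coe_ne_bot _)] at this
  exact hz (top_le_iff.1 this)

lemma IsSubdiff.inner_sub_nonneg {φ : E → EReal} (hbot : ∀ z, φ z ≠ ⊥) (hne : ∃ z, φ z ≠ ⊤)
    {x y v w : E} (hx : IsSubdiff φ x v) (hy : IsSubdiff φ y w) :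
    0 ≤ inner ℝ (v - w) (x - y) := by
  have h₁ := hx y
  have h₂ := hy x
  rw [← EReal.coe_toReal (hx.ne_top hne) (hbot x), ← EReal.coe_toReal (hy.ne_top hne) (hbot y),
    ← EReal.coe_add, EReal.coe_le_coe_iff] at h₁ h₂
  rw [← neg_sub x y, inner_neg_right] at h₁
  rw [inner_sub_left]
  linarith

lemma max_mul_norm_le_norm_smul_add {c l : ℝ} {X V : E} (hc : 0 ≤ c) (hcl : c ≤ l)
    (hXV : 0 ≤ inner ℝ V X) : max (c * ‖X‖) ‖V‖ ≤ ‖l • X + V‖ := by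
  have hsq : ‖l • X + V‖ ^ 2 = (l * ‖X‖) ^ 2 + 2 * l * inner ℝ V X + ‖V‖ ^ 2 := by
    rw [norm_add_sq_real, norm_smul, Real.norm_of_nonneg (hc.trans hcl), inner_smul_left,
      real_inner_comm, RCLike.conj_to_real]
    ring
  have hcross : 0 ≤ 2 * l * inner ℝ V X := mul_nonneg (by linarith) hXV
  refine max_le (abs_le_of_sq_le_sq' ?_ (norm_nonneg _)).2
    (abs_le_of_sq_le_sq' ?_ (norm_nonneg _)).2
  · nlinarith [mul_le_mul_of_nonneg_right hcl (norm_nonneg X), mul_nonneg hc (norm_nonneg X)]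
  · nlinarith [sq_nonneg (l * ‖X‖)]

variable {φ : E → EReal} {ψ' : E → E} {lam : ℝ → ℝ} {T Lψ c₀ : ℝ} {x v x' v' y w y' w' : ℝ → E}

namespace StrongSol

lemma continuousOn_x (sol : StrongSol φ ψ' lam T x v x' v') : ContinuousOn x (Icc 0 T) :=
  continuousOn_of_forall_eq_add_integral sol.xint sol.xrep

lemma continuousOn_v (sol : StrongSol φ ψ' lam T x v x' v') : ContinuousOn v (Icc 0 T) :=
  continuousOn_of_forall_eq_add_integral sol.vint sol.vrep

lemma continuousOn_solDist (sol₁ : StrongSol φ ψ' lam T x v x' v')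
    (sol₂ : StrongSol φ ψ' lam T y w y' w') : ContinuousOn (solDist c₀ x v y w) (Icc 0 T) :=
  (continuousOn_const.mul (sol₁.continuousOn_x.sub sol₂.continuousOn_x).norm).sup
    (sol₁.continuousOn_v.sub sol₂.continuousOn_v).norm

lemma norm_smul_sub_add_sub_sub_le (sol₁ : StrongSol φ ψ' lam T x v x' v')
    (sol₂ : StrongSol φ ψ' lam T y w y' w') (hlip : ∀ a b : E, ‖ψ' a - ψ' b‖ ≤ Lψ * ‖a - b‖)
    (hBV : BoundedVariationOn lam (Icc 0 T)) {r s C D : ℝ} (hr : 0 ≤ r) (hrs : r ≤ s)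
    (hs : s ≤ T) (hC : ∀ t ∈ Icc r s, ‖x t - y t‖ ≤ C)
    (hD : ∀ t ∈ Icc r s, ‖v t - w t‖ + Lψ * ‖x t - y t‖ ≤ D) :
    ‖(lam s • (x s - y s) + (v s - w s)) - (lam r • (x r - y r) + (v r - w r))‖
      ≤ (eVariationOn lam (Icc r s)).toReal * C + D * (s - r) := by
  have hsub : Icc r s ⊆ Icc 0 T := Icc_subset_Icc hr hs
  have hrI : r ∈ Icc 0 T := hsub (left_mem_Icc.2 hrs)
  have hψ' : Continuous ψ' :=
    (LipschitzWith.of_dist_le' fun a b => by simpa only [dist_eq_norm] using hlip a b).continuous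
  have hX : ∀ t ∈ Icc 0 T, (x - y) t = (x - y) r + ∫ u in r..t, (x' - y') u := fun t ht =>
    eq_add_integral_of_forall_eq_add_integral (sol₁.xint.sub sol₂.xint)
      (forall_sub_eq_add_integral sol₁.xint sol₂.xint sol₁.xrep sol₂.xrep) hrI ht
  have hV : ∀ t ∈ Icc 0 T, (v - w) t = (v - w) r + ∫ u in r..t, (v' - w') u := fun t ht =>
    eq_add_integral_of_forall_eq_add_integral (sol₁.vint.sub sol₂.vint)
      (forall_sub_eq_add_integral sol₁.vint sol₂.vint sol₁.vrep sol₂.vrep) hrI ht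
  have hG : ContinuousOn (fun t => (v t - w t) + (ψ' (x t) - ψ' (y t))) (Icc r s) :=
    ((sol₁.continuousOn_v.sub sol₂.continuousOn_v).add
      ((hψ'.comp_continuousOn sol₁.continuousOn_x).sub
        (hψ'.comp_continuousOn sol₂.continuousOn_x))).mono hsub
  refine norm_smul_add_sub_smul_add_le (X := x - y) (V := v - w) (V' := v' - w')
    (G := fun t => (v t - w t) + (ψ' (x t) - ψ' (y t))) hrs (hBV.mono hsub)
    ((sol₁.xint.sub sol₂.xint).mono_set hsub) (fun t ht => hX t (hsub ht))
    (hV s (hsub (right_mem_Icc.2 hrs))) hG.integrableOn_Icc ?_ hC fun t ht => ?_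
  · have hIoo : Ioo r s ⊆ Ioo 0 T := Ioo_subset_Ioo hr hs
    filter_upwards [ae_restrict_of_ae_restrict_of_subset hIoo sol₁.eqn,
      ae_restrict_of_ae_restrict_of_subset hIoo sol₂.eqn] with t h₁ h₂
    rw [← sub_eq_zero, ← sub_eq_zero.2 (h₁.trans h₂.symm)]
    simp only [Pi.sub_apply, smul_sub]
    abel
  · exact (norm_add_le _ _).trans ((add_le_add_right (hlip _ _) _).trans (hD t ht))

lemma solDist_le (hbot : ∀ z, φ z ≠ ⊥) (hne : ∃ z, φ z ≠ ⊤) (hLψ : 0 ≤ Lψ)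
    (hlip : ∀ a b : E, ‖ψ' a - ψ' b‖ ≤ Lψ * ‖a - b‖) (hc₀ : 0 < c₀)
    (hBV : BoundedVariationOn lam (Icc 0 T)) (hinf : ∀ t ∈ Icc 0 T, c₀ ≤ lam t)
    (sol₁ : StrongSol φ ψ' lam T x v x' v') (sol₂ : StrongSol φ ψ' lam T y w y' w')
    {r s M : ℝ} (hr : 0 ≤ r) (hrs : r ≤ s) (hs : s ≤ T)
    (hM : ∀ t ∈ Icc r s, solDist c₀ x v y w t ≤ M) :
    solDist c₀ x v y w s
      ≤ ((|lam 0| + (eVariationOn lam (Icc 0 T)).toReal) / c₀ + 1) * solDist c₀ x v y w r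
        + ((variationOnFromTo lam (Icc 0 T) 0 s - variationOnFromTo lam (Icc 0 T) 0 r) / c₀
          + (1 + Lψ / c₀) * (s - r)) * M := by
  have hsub : Icc r s ⊆ Icc 0 T := Icc_subset_Icc hr hs
  have hrI : r ∈ Icc 0 T := hsub (left_mem_Icc.2 hrs)
  have hsI : s ∈ Icc 0 T := hsub (right_mem_Icc.2 hrs)
  have h0 : (0 : ℝ) ∈ Icc 0 T := left_mem_Icc.2 (hr.trans hrI.2)
  have hZs : solDist c₀ x v y w s ≤ ‖lam s • (x s - y s) + (v s - w s)‖ :=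
    max_mul_norm_le_norm_smul_add hc₀.le (hinf s hsI)
      ((sol₁.subdiff s hsI).inner_sub_nonneg hbot hne (sol₂.subdiff s hsI))
  have hX : ∀ t ∈ Icc r s, ‖x t - y t‖ ≤ M / c₀ := fun t ht =>
    (norm_sub_le_solDist_div hc₀ t).trans (div_le_div_of_nonneg_right (hM t ht) hc₀.le)
  have hD : ∀ t ∈ Icc r s, ‖v t - w t‖ + Lψ * ‖x t - y t‖ ≤ (1 + Lψ / c₀) * M := fun t ht =>
    calc _ ≤ M + Lψ * (M / c₀) :=
          add_le_add ((le_max_right _ _).trans (hM t ht)) (mul_le_mul_of_nonneg_left (hX t ht) hLψ)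
      _ = _ := by ring
  have hvar : (eVariationOn lam (Icc r s)).toReal
      = variationOnFromTo lam (Icc 0 T) 0 s - variationOnFromTo lam (Icc 0 T) 0 r := by
    rw [variationOnFromTo.sub_right hBV.locallyBoundedVariationOn h0 hsI hrI,
      variationOnFromTo.eq_of_le _ _ hrs, inter_eq_self_of_subset_right hsub]
  calc solDist c₀ x v y w s ≤ ‖lam s • (x s - y s) + (v s - w s)‖ := hZs
    _ ≤ ‖lam r • (x r - y r) + (v r - w r)‖
          + ‖(lam s • (x s - y s) + (v s - w s)) - (lam r • (x r - y r) + (v r - w r))‖ :=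
        norm_le_norm_add_norm_sub' _ _
    _ ≤ _ := add_le_add (norm_smul_sub_add_sub_le_solDist hc₀ (hBV.abs_le h0 hrI))
        (sol₁.norm_smul_sub_add_sub_sub_le sol₂ hlip hBV hr hrs hs hX hD)
    _ = _ := by rw [hvar]; ring

end StrongSol

end Solutions

theorem stmt15_general (φ : H → EReal) (ψ : H → ℝ) (ψ' : H → H) (hst : Standing φ ψ ψ')
    (Lψ : ℝ) (hLψ : 0 ≤ Lψ)
    (hlip : ∀ a b : H, ‖ψ' a - ψ' b‖ ≤ Lψ * ‖a - b‖)
    (lam : ℝ → ℝ) (T c₀ : ℝ) (hc₀ : 0 < c₀)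
    (hBV : eVariationOn lam (Set.Icc 0 T) ≠ ⊤)
    (hinf : ∀ t ∈ Set.Icc (0:ℝ) T, c₀ ≤ lam t)
    (x₀ v₀ : H)
    (x v x' v' y w y' w' : ℝ → H)
    (sol₁ : StrongSol φ ψ' lam T x v x' v')
    (sol₂ : StrongSol φ ψ' lam T y w y' w')
    (hx0 : x 0 = x₀) (hv0 : v 0 = v₀) (hy0 : y 0 = x₀) (hw0 : w 0 = v₀) :
    ∀ t ∈ Set.Icc (0:ℝ) T, x t = y t ∧ v t = w t := by
  obtain ⟨⟨hbot, hne, -, -⟩, -, -, -⟩ := hst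
  have hBV' : BoundedVariationOn lam (Icc 0 T) := hBV
  have hF : MonotoneOn (fun t => variationOnFromTo lam (Icc 0 T) 0 t / c₀ + (1 + Lψ / c₀) * t)
      (Icc 0 T) := fun r hr s hs hrs =>
    add_le_add (div_le_div_of_nonneg_right (variationOnFromTo.monotoneOn
      hBV'.locallyBoundedVariationOn (left_mem_Icc.2 (hr.1.trans hr.2)) hr hs hrs) hc₀.le)
      (mul_le_mul_of_nonneg_left hrs (by positivity))
  have hzero : EqOn (solDist c₀ x v y w) 0 (Icc 0 T) :=
    eqOn_zero_of_stieltjes_gronwall (C := (|lam 0| + (eVariationOn lam (Icc 0 T)).toReal) / c₀ + 1)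
      (sol₁.continuousOn_solDist sol₂)
      (fun t _ => (norm_nonneg _).trans (le_max_right _ _))
      (by simp [solDist, hx0, hy0, hv0, hw0]) hF fun r s M hr hrs hs hM =>
        (StrongSol.solDist_le hbot hne hLψ hlip hc₀ hBV' hinf sol₁ sol₂ hr hrs hs hM).trans_eq
          (by ring)
  exact fun t ht => eq_and_eq_of_solDist_eq_zero hc₀ (hzero ht)

theorem stmt15 (φ : H → EReal) (ψ : H → ℝ) (ψ' : H → H) (hst : Standing φ ψ ψ')
    (Lψ : ℝ) (hLψ : 0 ≤ Lψ)
    (hlip : ∀ a b : H, ‖ψ' a - ψ' b‖ ≤ Lψ * ‖a - b‖)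
    (lam : ℝ → ℝ) (T c₀ : ℝ) (hT : 0 < T) (hc₀ : 0 < c₀)
    (hBV : eVariationOn lam (Set.Icc 0 T) ≠ ⊤)
    (hinf : ∀ t ∈ Set.Icc (0:ℝ) T, c₀ ≤ lam t)
    (x₀ v₀ : H) (hv₀ : IsSubdiff φ x₀ v₀)
    (x v x' v' y w y' w' : ℝ → H)
    (sol₁ : StrongSol φ ψ' lam T x v x' v')
    (sol₂ : StrongSol φ ψ' lam T y w y' w')
    (hx0 : x 0 = x₀) (hv0 : v 0 = v₀) (hy0 : y 0 = x₀) (hw0 : w 0 = v₀) :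
    ∀ t ∈ Set.Icc (0:ℝ) T, x t = y t ∧ v t = w t :=
  stmt15_general φ ψ ψ' hst Lψ hLψ hlip lam T c₀ hc₀ hBV hinf x₀ v₀ x v x' v' y w y' w' sol₁ sol₂
    hx0 hv0 hy0 hw0
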